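/- Let ρ be a density matrix on H and σ_n a density matrix on H^{⊗n}, λ ∈ ℝ, s ∈ (0,1), and let M := {ρ^{⊗n} - 2^λ σ_n}₊ be the projector onto the positive part of ρ^{⊗n} - 2^λ σ_n. Then tr[(1-M)ρ^{⊗n}] ≤ 2^{(1-s)(λ - D_s(ρ^{⊗n}‖σ_n))} and tr[M σ_n] ≤ 2^{-sλ - (1-s) D_s(ρ^{⊗n}‖σ_n)}. -/

import Mathlib

noncomputable section
open scoped BigOperators ComplexOrder

variable {n : Type*} [Fintype n] [DecidableEq n]

/-- A density matrix: positive semidefinite with trace one. -/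
def IsDensity (ρ : Matrix n n ℂ) : Prop := ρ.PosSemidef ∧ ρ.trace = 1

/-- Apply a real function to a Hermitian matrix via the functional calculus
(junk value `0` if the matrix is not Hermitian). -/
noncomputable def matFun (A : Matrix n n ℂ) (f : ℝ → ℝ) : Matrix n n ℂ :=
  if h : A.IsHermitian then h.cfc f else 0

/-- Fractional matrix power `X^s` via functional calculus (on the support; `0^s = 0`). -/
noncomputable def mpow (A : Matrix n n ℂ) (s : ℝ) : Matrix n n ℂ :=
  matFun A (fun x => x ^ s)

/-- Projector onto the eigenspace of strictly positive eigenvalues of `A`. -/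
noncomputable def posProj (A : Matrix n n ℂ) : Matrix n n ℂ :=
  matFun A (fun x => if 0 < x then 1 else 0)

/-- Petz divergence with logarithm base 2: `D_s(ρ‖σ) = (1/(s-1)) log₂ tr[ρ^s σ^{1-s}]`. -/
noncomputable def petzD2 (s : ℝ) (ρ σ : Matrix n n ℂ) : ℝ :=
  (1 / (s - 1)) * Real.logb 2 (((mpow ρ s * mpow σ (1 - s)).trace).re)

/-- `k`-fold tensor (Kronecker) power of a matrix. -/
noncomputable def tpow {d : ℕ} (ρ : Matrix (Fin d) (Fin d) ℂ) (k : ℕ) :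
    Matrix (Fin k → Fin d) (Fin k → Fin d) ℂ :=
  Matrix.of fun x y => ∏ i, ρ (x i) (y i)

/-!
Audenaert's inequality is proved along the lines of Jakšić, Ogata, Pautrat and Pillet.
Write `X - Y = T₊ - T₋` and `a := Y + T₊ = X + T₋`, so that `X ≤ a` and `Y ≤ a`. In the identity
  `a + X^s Y^(1-s) - X - Y`
    `= (a^s - X^s)(a^(1-s) - Y^(1-s)) + X^s (a^(1-s) - X^(1-s)) + (a^s - Y^s) Y^(1-s)`
each term on the right has nonnegative trace, by operator monotonicity of `t ↦ t^r` for
`r ∈ [0, 1]`; and `tr[X(1-P)] + tr[YP] = tr X - tr T₊ = tr X + tr Y - tr a` for `P = {X - Y}₊`.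
For `X = ρ^{⊗n}` and `Y = 2^λ σₙ` both error terms are then bounded through
`2^{(1-s)λ} tr[(ρ^{⊗n})^s σₙ^(1-s)] = 2^{(1-s)(λ - D_s(ρ^{⊗n}‖σₙ))}`.
-/

namespace CFC

variable {A : Type*} [PartialOrder A] [Ring A] [StarRing A] [TopologicalSpace A]
  [StarOrderedRing A] [Algebra ℝ A] [ContinuousFunctionalCalculus ℝ A IsSelfAdjoint]
  [NonnegSpectrumClass ℝ A]

lemma rpow_add_of_nonneg (a : A) {x y : ℝ} (hx : 0 ≤ x) (hy : 0 ≤ y) :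
    a ^ (x + y) = a ^ x * a ^ y := by
  simp only [rpow_def]
  rw [← cfc_mul _ _ a (NNReal.continuous_rpow_const hx).continuousOn
    (NNReal.continuous_rpow_const hy).continuousOn]
  exact cfc_congr fun z _ => NNReal.rpow_add_of_nonneg z hx hy

lemma rpow_mul_rpow_one_sub {a : A} (ha : 0 ≤ a) {s : ℝ} (hs : s ∈ Set.Icc (0 : ℝ) 1) :
    a ^ s * a ^ (1 - s) = a := by
  rw [← rpow_add_of_nonneg a hs.1 (sub_nonneg.2 hs.2), add_sub_cancel, rpow_one a]

lemma smul_rpow [IsSemitopologicalRing A] [T2Space A] {a : A} (ha : 0 ≤ a) {c : ℝ}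
    (hc : 0 ≤ c) {t : ℝ} (ht : 0 ≤ t) : (c • a) ^ t = c ^ t • a ^ t := by
  have hca : 0 ≤ c • a := by
    rw [← cfc_const_mul_id c a]
    exact cfc_nonneg fun x hx => mul_nonneg hc (spectrum_nonneg_of_nonneg ha hx)
  have hpow : Continuous fun x : ℝ => x ^ t := Real.continuous_rpow_const ht
  rw [rpow_eq_cfc_real hca, rpow_eq_cfc_real ha, ← cfc_smul (c ^ t) _ a hpow.continuousOn,
    ← cfc_comp_smul c _ a hpow.continuousOn]
  exact cfc_congr fun x hx => Real.mul_rpow hc (spectrum_nonneg_of_nonneg ha hx)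

end CFC

open scoped Matrix.Norms.L2Operator MatrixOrder

namespace Matrix

lemma trace_mul_nonneg {A B : Matrix n n ℂ} (hA : 0 ≤ A) (hB : 0 ≤ B) :
    0 ≤ (A * B).trace := by
  obtain ⟨C, rfl⟩ := CStarAlgebra.nonneg_iff_eq_star_mul_self.mp hB
  rw [← mul_assoc, trace_mul_cycle]
  exact (nonneg_iff_posSemidef.mp (star_right_conjugate_nonneg hA C)).trace_nonneg

lemma trace_add_trace_le_trace_rpow_mul_rpow_add_trace {X Y a : Matrix n n ℂ} (hX : 0 ≤ X)
    (hY : 0 ≤ Y) (hXa : X ≤ a) (hYa : Y ≤ a) {s : ℝ} (hs : s ∈ Set.Icc (0 : ℝ) 1) :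
    X.trace + Y.trace ≤ (X ^ s * Y ^ (1 - s)).trace + a.trace := by
  have hs' : 1 - s ∈ Set.Icc (0 : ℝ) 1 := ⟨sub_nonneg.2 hs.2, sub_le_self 1 hs.1⟩
  have hsum : (a ^ s - X ^ s) * (a ^ (1 - s) - Y ^ (1 - s)) + X ^ s * (a ^ (1 - s) - X ^ (1 - s))
      + (a ^ s - Y ^ s) * Y ^ (1 - s) = a ^ s * a ^ (1 - s) + X ^ s * Y ^ (1 - s)
        - X ^ s * X ^ (1 - s) - Y ^ s * Y ^ (1 - s) := by
    noncomm_ring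
  rw [CFC.rpow_mul_rpow_one_sub hX hs, CFC.rpow_mul_rpow_one_sub hY hs,
    CFC.rpow_mul_rpow_one_sub (hX.trans hXa) hs] at hsum
  have h : 0 ≤ (a + X ^ s * Y ^ (1 - s) - X - Y).trace := by
    rw [← hsum, trace_add, trace_add]
    refine add_nonneg (add_nonneg ?_ ?_) ?_ <;> apply trace_mul_nonneg <;>
      simp only [sub_nonneg, CFC.rpow_nonneg, CFC.rpow_le_rpow hs, CFC.rpow_le_rpow hs', hXa, hYa]
  rw [trace_sub, trace_sub, trace_add, sub_sub, sub_nonneg] at h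
  rwa [add_comm _ (trace a)]

end Matrix

open Matrix

lemma matFun_eq_cfc {A : Matrix n n ℂ} (hA : A.IsHermitian) (f : ℝ → ℝ) :
    matFun A f = cfc f A := by
  rw [matFun, dif_pos hA, hA.cfc_eq]

lemma mpow_eq_rpow {A : Matrix n n ℂ} (hA : 0 ≤ A) (s : ℝ) : mpow A s = A ^ s := by
  rw [mpow, matFun_eq_cfc (nonneg_iff_posSemidef.mp hA).isHermitian, CFC.rpow_eq_cfc_real hA]

lemma mul_posProj {A : Matrix n n ℂ} (hA : A.IsHermitian) : A * posProj A = A⁺ := by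
  have hf : ContinuousOn (fun x : ℝ => if 0 < x then (1 : ℝ) else 0) (spectrum ℝ A) :=
    A.finite_real_spectrum.continuousOn _
  rw [posProj, matFun_eq_cfc hA]
  conv_lhs => arg 1; rw [← cfc_id' ℝ A hA.isSelfAdjoint]
  rw [← cfc_mul (fun x : ℝ => x) _ A continuousOn_id hf, CFC.posPart_def, cfcₙ_eq_cfc]
  refine cfc_congr fun x _ => ?_
  split_ifs with hx
  · simp [posPart_of_nonneg hx.le]
  · simp [posPart_of_nonpos (not_lt.mp hx)]

lemma posProj_nonneg (A : Matrix n n ℂ) : 0 ≤ posProj A := by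
  by_cases hA : A.IsHermitian
  · rw [posProj, matFun_eq_cfc hA]
    exact cfc_nonneg fun x _ => by split_ifs <;> norm_num
  · rw [posProj, matFun, dif_neg hA]

lemma posProj_le_one (A : Matrix n n ℂ) : posProj A ≤ 1 := by
  by_cases hA : A.IsHermitian
  · rw [posProj, matFun_eq_cfc hA]
    exact cfc_le_one _ _ fun x _ => by split_ifs <;> norm_num
  · rw [posProj, matFun, dif_neg hA]
    exact zero_le_one

theorem trace_mul_one_sub_posProj_add_trace_mul_posProj_le {X Y : Matrix n n ℂ} (hX : 0 ≤ X)
    (hY : 0 ≤ Y) {s : ℝ} (hs : s ∈ Set.Icc (0 : ℝ) 1) :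
    (X * (1 - posProj (X - Y))).trace + (Y * posProj (X - Y)).trace ≤
      (X ^ s * Y ^ (1 - s)).trace := by
  have hT : (X - Y).IsHermitian :=
    (nonneg_iff_posSemidef.mp hX).isHermitian.sub (nonneg_iff_posSemidef.mp hY).isHermitian
  have hXa : X ≤ Y + (X - Y)⁺ := sub_le_iff_le_add'.mp (CFC.le_posPart hT.isSelfAdjoint)
  have hYa : Y ≤ Y + (X - Y)⁺ := le_add_of_nonneg_right (CFC.posPart_nonneg _)
  have key := trace_add_trace_le_trace_rpow_mul_rpow_add_trace hX hY hXa hYa hs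
  have hlhs : X * (1 - posProj (X - Y)) + Y * posProj (X - Y) = X - (X - Y)⁺ := by
    rw [← mul_posProj hT]; noncomm_ring
  rw [← trace_add, hlhs, trace_sub, sub_le_iff_le_add, ← add_le_add_iff_right Y.trace]
  rw [trace_add] at key
  exact key.trans_eq (by abel)

theorem trace_re_one_sub_posProj_mul_add_mul_le {X σ : Matrix n n ℂ} (hX : 0 ≤ X)
    (hσ : 0 ≤ σ) {c : ℝ} (hc : 0 ≤ c) {s : ℝ} (hs : s ∈ Set.Icc (0 : ℝ) 1) :
    (((1 - posProj (X - (c : ℂ) • σ)) * X).trace).re +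
        c * ((posProj (X - (c : ℂ) • σ) * σ).trace).re ≤
      c ^ (1 - s) * ((X ^ s * σ ^ (1 - s)).trace).re := by
  have hcσ : (c : ℂ) • σ = c • σ := (RCLike.real_smul_eq_coe_smul c σ).symm
  have hY : 0 ≤ c • σ := ((nonneg_iff_posSemidef.mp hσ).smul hc).nonneg
  have h := trace_mul_one_sub_posProj_add_trace_mul_posProj_le hX hY hs
  rw [CFC.smul_rpow hσ hc (sub_nonneg.2 hs.2), mul_smul_comm, smul_mul_assoc, trace_smul,
    trace_smul, ← hcσ, trace_mul_comm X, trace_mul_comm σ] at h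
  simpa only [Complex.add_re, Complex.smul_re, smul_eq_mul] using (Complex.le_def.mp h).1

lemma tpow_mul {d : ℕ} (A B : Matrix (Fin d) (Fin d) ℂ) (k : ℕ) :
    tpow (A * B) k = tpow A k * tpow B k := by
  ext x y
  simp only [tpow, mul_apply, of_apply, Finset.prod_univ_sum, Fintype.piFinset_univ,
    Finset.prod_mul_distrib]

lemma tpow_conjTranspose {d : ℕ} (A : Matrix (Fin d) (Fin d) ℂ) (k : ℕ) :
    tpow Aᴴ k = (tpow A k)ᴴ := by
  ext x y
  simp [tpow, star_prod]

lemma tpow_nonneg {d : ℕ} {A : Matrix (Fin d) (Fin d) ℂ} (hA : 0 ≤ A) (k : ℕ) :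
    0 ≤ tpow A k := by
  obtain ⟨B, rfl⟩ := CStarAlgebra.nonneg_iff_eq_star_mul_self.mp hA
  rw [tpow_mul, star_eq_conjTranspose, tpow_conjTranspose]
  exact star_mul_self_nonneg _

lemma le_two_rpow_and_le_two_rpow_sub {α β lam E : ℝ} (hα : 0 ≤ α) (hβ : 0 ≤ β)
    (h : α + 2 ^ lam * β ≤ 2 ^ E) : α ≤ 2 ^ E ∧ β ≤ 2 ^ (E - lam) := by
  have hc : (0 : ℝ) < 2 ^ lam := by positivity
  refine ⟨by nlinarith, ?_⟩
  rw [Real.rpow_sub two_pos, le_div_iff₀ hc]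
  nlinarith

lemma trace_re_le_two_rpow_petzD2 {ρ σ : Matrix n n ℂ} (hρ : 0 ≤ ρ) (hσ : 0 ≤ σ) {s : ℝ}
    (hs : s ≠ 1) : ((ρ ^ s * σ ^ (1 - s)).trace).re ≤ 2 ^ ((s - 1) * petzD2 s ρ σ) := by
  have hQ : 0 ≤ ((ρ ^ s * σ ^ (1 - s)).trace).re :=
    (Complex.nonneg_iff.mp
      (trace_mul_nonneg (CFC.rpow_nonneg (a := ρ)) (CFC.rpow_nonneg (a := σ)))).1
  rw [petzD2, ← mul_assoc, mul_one_div_cancel (sub_ne_zero.2 hs), one_mul, mpow_eq_rpow hρ,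
    mpow_eq_rpow hσ]
  rcases hQ.eq_or_lt with h | h
  · rw [← h, Real.logb_zero, Real.rpow_zero]
    exact zero_le_one
  · rw [Real.rpow_logb two_pos (by norm_num) h]

/-- Error bounds for the Neyman–Pearson-type test `M = {ρ^{⊗n} - 2^λ σₙ}₊`:
`tr[(1-M)ρ^{⊗n}] ≤ 2^{(1-s)(λ - D_s(ρ^{⊗n}‖σₙ))}` and
`tr[M σₙ] ≤ 2^{-sλ - (1-s) D_s(ρ^{⊗n}‖σₙ)}`. -/
theorem neyman_pearson_petz_bounds {d : ℕ} (k : ℕ) (ρ : Matrix (Fin d) (Fin d) ℂ)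
    (σn : Matrix (Fin k → Fin d) (Fin k → Fin d) ℂ)
    (hρ : IsDensity ρ) (hσn : IsDensity σn)
    (lam s : ℝ) (hs : s ∈ Set.Ioo (0 : ℝ) 1) :
    (((1 - posProj (tpow ρ k - (((2 : ℝ) ^ lam : ℝ) : ℂ) • σn)) * tpow ρ k).trace).re ≤
        (2 : ℝ) ^ ((1 - s) * (lam - petzD2 s (tpow ρ k) σn)) ∧
      ((posProj (tpow ρ k - (((2 : ℝ) ^ lam : ℝ) : ℂ) • σn) * σn).trace).re ≤
        (2 : ℝ) ^ (-s * lam - (1 - s) * petzD2 s (tpow ρ k) σn) := by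
  have hX : 0 ≤ tpow ρ k := tpow_nonneg hρ.1.nonneg k
  have hσ : 0 ≤ σn := hσn.1.nonneg
  obtain ⟨hα, hβ⟩ := le_two_rpow_and_le_two_rpow_sub
    (Complex.nonneg_iff.mp (trace_mul_nonneg (sub_nonneg.2 (posProj_le_one _)) hX)).1
    (Complex.nonneg_iff.mp (trace_mul_nonneg (posProj_nonneg _) hσ)).1
    (E := (1 - s) * (lam - petzD2 s (tpow ρ k) σn)) <| calc
      _ ≤ ((2 : ℝ) ^ lam) ^ (1 - s) * ((tpow ρ k ^ s * σn ^ (1 - s)).trace).re :=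
        trace_re_one_sub_posProj_mul_add_mul_le hX hσ (by positivity)
          (Set.Ioo_subset_Icc_self hs)
      _ ≤ ((2 : ℝ) ^ lam) ^ (1 - s) * 2 ^ ((s - 1) * petzD2 s (tpow ρ k) σn) := by
        gcongr
        exact trace_re_le_two_rpow_petzD2 hX hσ hs.2.ne
      _ = _ := by
        rw [← Real.rpow_mul zero_le_two, ← Real.rpow_add two_pos]
        ring_nf
  exact ⟨hα, hβ.trans_eq (by ring_nf)⟩
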